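/- Preservation for fix unfolding: if Δ;· ⊢ fix v : t with v a value, then t = t1 → t2 for some types t1, t2, with Δ;· ⊢ v : (t1 → t2) → t1 → t2, and Δ;· ⊢ v (λx = fix v x) : t1 → t2. -/
import Mathlib


namespace Elevate

/-! ### Types and rows (merged; separated by kinds) -/

inductive Ty : Type
  | tvar : String → Ty
  | arrow : Ty → Ty → Ty
  | record : Ty → Ty
  | variant : Ty → Ty
  | recT : String → Ty → Ty       -- α as τ
  | rempty : Ty                   -- empty row ·
  | rcons : String → Ty → Ty → Ty -- (l : t | ρ)

/-- Contractive types: type constructor applications. -/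
def Ty.Contractive : Ty → Prop
  | .arrow _ _ => True
  | .record _ => True
  | .variant _ => True
  | _ => False

/-- Free type variables. -/
def Ty.ftv : Ty → Finset String
  | .tvar α => {α}
  | .arrow t1 t2 => t1.ftv ∪ t2.ftv
  | .record ρ => ρ.ftv
  | .variant ρ => ρ.ftv
  | .recT α τ => τ.ftv.erase α
  | .rempty => ∅
  | .rcons _ t ρ => t.ftv ∪ ρ.ftv

/-- Substitution of a single type variable. -/
def Ty.subst (α : String) (s : Ty) : Ty → Ty
  | .tvar β => if β = α then s else .tvar β
  | .arrow t1 t2 => .arrow (Ty.subst α s t1) (Ty.subst α s t2)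
  | .record ρ => .record (Ty.subst α s ρ)
  | .variant ρ => .variant (Ty.subst α s ρ)
  | .recT β τ => if β = α then .recT β τ else .recT β (Ty.subst α s τ)
  | .rempty => .rempty
  | .rcons l t ρ => .rcons l (Ty.subst α s t) (Ty.subst α s ρ)

/-- Simultaneous substitution given by an association list. -/
def Ty.substMap (S : List (String × Ty)) : Ty → Ty
  | .tvar β => (List.lookup β S).getD (.tvar β)
  | .arrow t1 t2 => .arrow (Ty.substMap S t1) (Ty.substMap S t2)
  | .record ρ => .record (Ty.substMap S ρ)
  | .variant ρ => .variant (Ty.substMap S ρ)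
  | .recT β τ => .recT β (Ty.substMap (S.filter (fun p => p.1 ≠ β)) τ)
  | .rempty => .rempty
  | .rcons l t ρ => .rcons l (Ty.substMap S t) (Ty.substMap S ρ)

/-! ### Kinds -/

/-- Row kinds: positive (finite) or negative (cofinite) sets of labels
    that can appear in a row. -/
inductive RowKind : Type
  | pos : Finset String → RowKind
  | neg : Finset String → RowKind

inductive Kind : Type
  | type : Kind
  | row : RowKind → Kind

/-- The row kind subset relation ⊑. -/
def RowKind.Sub : RowKind → RowKind → Prop
  | .pos L1, .pos L2 => L1 ⊆ L2
  | .neg L1, .neg L2 => L2 ⊆ L1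
  | .pos L1, .neg L2 => L1 ∩ L2 = ∅
  | .neg _, .pos _ => False

/-- The row kind extension operator `R + l`. -/
def RowKind.ext : RowKind → String → Option RowKind
  | .pos L, l => if l ∈ L then none else some (.pos (insert l L))
  | .neg L, l => if l ∈ L then some (.neg (L.erase l)) else none

/-- Kinding environments. -/
abbrev KEnv := List (String × Kind)

/-- Kinding judgment Δ ⊢ t : κ (also well-formedness of types and rows). -/
inductive HasKind : KEnv → Ty → Kind → Prop
  | tvar {Δ : KEnv} {α : String} {κ : Kind} :
      List.lookup α Δ = some κ → HasKind Δ (.tvar α) κ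
  | arrow {Δ t1 t2} :
      HasKind Δ t1 .type → HasKind Δ t2 .type → HasKind Δ (.arrow t1 t2) .type
  | record {Δ ρ R} :
      HasKind Δ ρ (.row R) → HasKind Δ (.record ρ) .type
  | variant {Δ ρ R} :
      HasKind Δ ρ (.row R) → HasKind Δ (.variant ρ) .type
  | recT {Δ α τ} :
      Ty.Contractive τ → HasKind ((α, .type) :: Δ) τ .type →
      HasKind Δ (.recT α τ) .type
  | rempty {Δ} : HasKind Δ .rempty (.row (.pos ∅))
  | rcons {Δ ρ R l t R'} :
      HasKind Δ ρ (.row R) → HasKind Δ t .type → RowKind.ext R l = some R' →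
      HasKind Δ (.rcons l t ρ) (.row R')

/-! ### Type schemes -/

inductive Scheme : Type
  | mono : Ty → Scheme
  | all : String → Kind → Scheme → Scheme

def Scheme.ftv : Scheme → Finset String
  | .mono t => t.ftv
  | .all α _ σ => σ.ftv.erase α

def Scheme.subst (α : String) (s : Ty) : Scheme → Scheme
  | .mono t => .mono (Ty.subst α s t)
  | .all β κ σ => if β = α then .all β κ σ else .all β κ (Scheme.subst α s σ)

def Scheme.substMap (S : List (String × Ty)) : Scheme → Scheme
  | .mono t => .mono (Ty.substMap S t)
  | .all β κ σ => .all β κ (Scheme.substMap (S.filter (fun p => p.1 ≠ β)) σ)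

/-- Generalize a type over a list of kinded type variables. -/
def Scheme.close : List (String × Kind) → Ty → Scheme
  | [], t => .mono t
  | (α, κ) :: as, t => .all α κ (Scheme.close as t)

/-- Type scheme instantiation Δ ⊢ σ ⪯ σ'. -/
inductive Inst : KEnv → Scheme → Scheme → Prop
  | refl {Δ σ} : Inst Δ σ σ
  | instType {Δ t α σ} :
      HasKind Δ t .type → α ∉ t.ftv →
      Inst Δ (.all α .type σ) (σ.subst α t)
  | instRow {Δ ρ R' R α σ} :
      HasKind Δ ρ (.row R') → RowKind.Sub R' R → α ∉ ρ.ftv →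
      Inst Δ (.all α (.row R) σ) (σ.subst α ρ)
  | trans {Δ σ0 σ1 σ2} :
      Inst Δ σ0 σ1 → Inst Δ σ1 σ2 → Inst Δ σ0 σ2

/-- Well-formedness of a scheme w.r.t. a kinding environment. -/
inductive SchemeWF : KEnv → Scheme → Prop
  | mono {Δ t} : HasKind Δ t .type → SchemeWF Δ (.mono t)
  | all {Δ α κ σ} : SchemeWF ((α, κ) :: Δ) σ → SchemeWF Δ (.all α κ σ)

/-! ### Terms -/

mutual
inductive Tm : Type
  | var : String → Tm
  | app : Tm → Tm → Tm
  | lam : String → Tm → Tm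
  | letE : String → Tm → Tm → Tm
  | fix : Tm
  | label : String → Tm → Tm            -- variant injection l e
  | record : Fields → Tm                -- record constructor
  | proj : Tm → String → Tm             -- e.l
  | remove : Tm → String → Tm           -- e.-l
  | modify : Tm → Fields → Tm           -- e.{…}
  | extend : Tm → Fields → Tm           -- e.+{…}
  | matchVoid : Tm → Tm                 -- match e with ⟨⟩
  | matchUnit : Tm → Tm → Tm            -- match e with ⟨{·} ⇒ e1⟩
  | matchVar : Tm → String → String → Tm → String → Tm → Tm
      -- match e with ⟨l x1 ⇒ e1 | x2 ⇒ e2⟩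
inductive Fields : Type
  | nil : Fields
  | cons : String → Tm → Fields → Fields
end

mutual
/-- Capture-avoiding substitution e[x ↦ v]. -/
def Tm.subst (x : String) (v : Tm) : Tm → Tm
  | .var y => if y = x then v else .var y
  | .app e1 e2 => .app (Tm.subst x v e1) (Tm.subst x v e2)
  | .lam y e => if y = x then .lam y e else .lam y (Tm.subst x v e)
  | .letE f e1 e2 =>
      .letE f (Tm.subst x v e1) (if f = x then e2 else Tm.subst x v e2)
  | .fix => .fix
  | .label l e => .label l (Tm.subst x v e)
  | .record fs => .record (Fields.subst x v fs)
  | .proj e l => .proj (Tm.subst x v e) l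
  | .remove e l => .remove (Tm.subst x v e) l
  | .modify e fs => .modify (Tm.subst x v e) (Fields.subst x v fs)
  | .extend e fs => .extend (Tm.subst x v e) (Fields.subst x v fs)
  | .matchVoid e => .matchVoid (Tm.subst x v e)
  | .matchUnit e e1 => .matchUnit (Tm.subst x v e) (Tm.subst x v e1)
  | .matchVar e l x1 e1 x2 e2 =>
      .matchVar (Tm.subst x v e) l
        x1 (if x1 = x then e1 else Tm.subst x v e1)
        x2 (if x2 = x then e2 else Tm.subst x v e2)
def Fields.subst (x : String) (v : Tm) : Fields → Fields
  | .nil => .nil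
  | .cons l e fs => .cons l (Tm.subst x v e) (Fields.subst x v fs)
end

mutual
/-- Free term variables. -/
def Tm.fv : Tm → Finset String
  | .var y => {y}
  | .app e1 e2 => e1.fv ∪ e2.fv
  | .lam y e => e.fv.erase y
  | .letE f e1 e2 => e1.fv ∪ e2.fv.erase f
  | .fix => ∅
  | .label _ e => e.fv
  | .record fs => Fields.fv fs
  | .proj e _ => e.fv
  | .remove e _ => e.fv
  | .modify e fs => e.fv ∪ Fields.fv fs
  | .extend e fs => e.fv ∪ Fields.fv fs
  | .matchVoid e => e.fv
  | .matchUnit e e1 => e.fv ∪ e1.fv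
  | .matchVar e _ x1 e1 x2 e2 => e.fv ∪ e1.fv.erase x1 ∪ e2.fv.erase x2
def Fields.fv : Fields → Finset String
  | .nil => ∅
  | .cons _ e fs => e.fv ∪ Fields.fv fs
end

/-! ### Field operations -/

def Fields.lookup : Fields → String → Option Tm
  | .nil, _ => none
  | .cons l e fs, l' => if l = l' then some e else Fields.lookup fs l'

def Fields.labels : Fields → List String
  | .nil => []
  | .cons l _ fs => l :: Fields.labels fs

def Fields.remove : Fields → String → Fields
  | .nil, _ => .nil
  | .cons l e fs, l' =>
      if l = l' then Fields.remove fs l' else .cons l e (Fields.remove fs l')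

/-- Record modification: replace the values of the fields occurring in `fs'`. -/
def Fields.update : Fields → Fields → Fields
  | .nil, _ => .nil
  | .cons l e fs, fs' => .cons l ((Fields.lookup fs' l).getD e) (Fields.update fs fs')

def Fields.append : Fields → Fields → Fields
  | .nil, fs' => fs'
  | .cons l e fs, fs' => .cons l e (Fields.append fs fs')

def Fields.ofList : List (String × Tm) → Fields
  | [] => .nil
  | (l, e) :: fs => .cons l e (Fields.ofList fs)

/-! ### Values -/

mutual
inductive IsValue : Tm → Prop
  | label {l v} : IsValue v → IsValue (.label l v)
  | record {fs} : FieldsValues fs → IsValue (.record fs)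
  | lam {x e} : IsValue (.lam x e)
  | fix : IsValue .fix
inductive FieldsValues : Fields → Prop
  | nil : FieldsValues .nil
  | cons {l e fs} : IsValue e → FieldsValues fs → FieldsValues (.cons l e fs)
end

/-! ### Typing -/

/-- Typing environments. -/
abbrev TEnv := List (String × Scheme)

/-- Free type variables of a typing environment. -/
def ftvEnv (Γ : TEnv) : Finset String :=
  Γ.foldr (fun p acc => p.2.ftv ∪ acc) ∅

/-- Well-formedness of a typing environment w.r.t. a kinding environment. -/
def EnvWF (Δ : KEnv) (Γ : TEnv) : Prop := ∀ p ∈ Γ, SchemeWF Δ p.2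

/-- A row built from a list of label-type pairs, terminated by the empty row. -/
def Row.ofList : List (String × Ty) → Ty
  | [] => .rempty
  | (l, t) :: lts => .rcons l t (Row.ofList lts)

/-- A row built from a list of label-type pairs, terminated by the row ρ. -/
def Row.append : List (String × Ty) → Ty → Ty
  | [], ρ => ρ
  | (l, t) :: lts, ρ => .rcons l t (Row.append lts ρ)

mutual
/-- The typing judgment Δ;Γ ⊢ e : t. -/
inductive HasTy : KEnv → TEnv → Tm → Ty → Prop
  | var {Δ Γ x σ t} :
      List.lookup x Γ = some σ → Inst Δ σ (.mono t) →
      HasTy Δ Γ (.var x) t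
  | app {Δ Γ f e t1 t2} :
      HasTy Δ Γ f (.arrow t1 t2) → HasTy Δ Γ e t1 →
      HasTy Δ Γ (.app f e) t2
  | lam {Δ Γ x e t1 t2} :
      HasTy Δ ((x, .mono t1) :: Γ) e t2 →
      HasTy Δ Γ (.lam x e) (.arrow t1 t2)
  | letE {Δ Γ f e1 e2 t1 t2} {as : List (String × Kind)} :
      (as.map Prod.fst).toFinset = t1.ftv \ ftvEnv Γ →
      (as.map Prod.fst).Nodup →
      HasTy (as ++ Δ) Γ e1 t1 →
      HasTy Δ ((f, Scheme.close as t1) :: Γ) e2 t2 →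
      HasTy Δ Γ (.letE f e1 e2) t2
  | fix {Δ Γ t1 t2} :
      HasTy Δ Γ .fix (.arrow (.arrow (.arrow t1 t2) (.arrow t1 t2)) (.arrow t1 t2))
  | label {Δ Γ e t l ρ R} :
      HasTy Δ Γ e t → HasKind Δ ρ (.row R) → RowKind.Sub R (.neg {l}) →
      HasTy Δ Γ (.label l e) (.variant (.rcons l t ρ))
  | unroll {Δ Γ e α τ} :
      HasTy Δ Γ e (.recT α τ) →
      HasTy Δ Γ e (τ.subst α (.recT α τ))
  | roll {Δ Γ e α τ} :
      HasTy Δ Γ e (τ.subst α (.recT α τ)) →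
      HasTy Δ Γ e (.recT α τ)
  | recordCons {Δ Γ fs lts} :
      HasTyFields Δ Γ fs lts →
      HasTy Δ Γ (.record fs) (.record (Row.ofList lts))
  | recordMod {Δ Γ e fs lts ρ} :
      HasTy Δ Γ e (.record (Row.append lts ρ)) →
      HasTyFields Δ Γ fs lts →
      HasTy Δ Γ (.modify e fs) (.record (Row.append lts ρ))
  | recordExt {Δ Γ e fs lts ρ R} :
      HasTy Δ Γ e (.record ρ) →
      HasKind Δ ρ (.row R) →
      RowKind.Sub R (.neg (lts.map Prod.fst).toFinset) →
      HasTyFields Δ Γ fs lts →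
      HasTy Δ Γ (.extend e fs) (.record (Row.append lts ρ))
  | fieldAccess {Δ Γ e l t ρ} :
      HasTy Δ Γ e (.record (.rcons l t ρ)) →
      HasTy Δ Γ (.proj e l) t
  | fieldDel {Δ Γ e l t ρ} :
      HasTy Δ Γ e (.record (.rcons l t ρ)) →
      HasTy Δ Γ (.remove e l) (.record ρ)
  | matchVoid {Δ Γ e trhs} :
      HasTy Δ Γ e (.variant .rempty) →
      HasTy Δ Γ (.matchVoid e) trhs
  | matchUnit {Δ Γ e e1 trhs} :
      HasTy Δ Γ e (.record .rempty) → HasTy Δ Γ e1 trhs →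
      HasTy Δ Γ (.matchUnit e e1) trhs
  | matchVar {Δ Γ e l x1 e1 x2 e2 t ρ trhs} {cs : List (String × Kind)} :
      (cs.map Prod.fst).toFinset = (t.ftv ∪ (Ty.variant ρ).ftv) \ ftvEnv Γ →
      (cs.map Prod.fst).Nodup →
      HasTy (cs ++ Δ) Γ e (.variant (.rcons l t ρ)) →
      HasTy Δ ((x1, Scheme.close (cs.filter (fun p => decide (p.1 ∈ t.ftv))) t) :: Γ) e1 trhs →
      HasTy Δ ((x2, Scheme.close (cs.filter (fun p => decide (p.1 ∈ (Ty.variant ρ).ftv)))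
                      (.variant ρ)) :: Γ) e2 trhs →
      HasTy Δ Γ (.matchVar e l x1 e1 x2 e2) trhs
/-- Typing of record fields against a list of label-type pairs. -/
inductive HasTyFields : KEnv → TEnv → Fields → List (String × Ty) → Prop
  | nil {Δ Γ} : HasTyFields Δ Γ .nil []
  | cons {Δ Γ l e t fs lts} :
      HasTy Δ Γ e t → HasTyFields Δ Γ fs lts →
      HasTyFields Δ Γ (.cons l e fs) ((l, t) :: lts)
end

/-! ### Operational semantics -/

/-- The redex reduction relation e1 ⇝ e2. -/
inductive Red : Tm → Tm → Prop
  | app {x e v} : IsValue v →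
      Red (.app (.lam x e) v) (e.subst x v)
  | letE {f v e2} : IsValue v →
      Red (.letE f v e2) (e2.subst f v)
  | fix {v x} : IsValue v → x ∉ v.fv →
      Red (.app .fix v) (.app v (.lam x (.app (.app .fix v) (.var x))))
  | fieldAccess {fs l v} : FieldsValues fs → Fields.lookup fs l = some v →
      Red (.proj (.record fs) l) v
  | fieldDel {fs l v} : FieldsValues fs → Fields.lookup fs l = some v →
      Red (.remove (.record fs) l) (.record (Fields.remove fs l))
  | recordMod {fs fs'} : FieldsValues fs → FieldsValues fs' →
      (∀ l ∈ Fields.labels fs', l ∈ Fields.labels fs) →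
      Red (.modify (.record fs) fs') (.record (Fields.update fs fs'))
  | recordExt {fs fs'} : FieldsValues fs → FieldsValues fs' →
      (∀ l ∈ Fields.labels fs', l ∉ Fields.labels fs) →
      Red (.extend (.record fs) fs') (.record (Fields.append fs fs'))
  | matchUnit {e} :
      Red (.matchUnit (.record .nil) e) e
  | matchMatch {l v x1 e1 x2 e2} : IsValue v →
      Red (.matchVar (.label l v) l x1 e1 x2 e2) (e1.subst x1 v)
  | matchSkip {l l' v x1 e1 x2 e2} : IsValue v → l ≠ l' →
      Red (.matchVar (.label l v) l' x1 e1 x2 e2) (e2.subst x2 (.label l v))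

/-- Evaluation contexts (left-to-right, call-by-value). -/
inductive Ctx : Type
  | hole : Ctx
  | appL : Ctx → Tm → Ctx
  | appR : (v : Tm) → IsValue v → Ctx → Ctx
  | letE : String → Ctx → Tm → Ctx
  | label : String → Ctx → Ctx
  | record : (pre : Fields) → FieldsValues pre → String → Ctx → Fields → Ctx
  | proj : Ctx → String → Ctx
  | remove : Ctx → String → Ctx
  | modifyL : Ctx → Fields → Ctx
  | extendL : Ctx → Fields → Ctx
  | modifyR : (v : Tm) → IsValue v → (pre : Fields) → FieldsValues pre →
      String → Ctx → Fields → Ctx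
  | extendR : (v : Tm) → IsValue v → (pre : Fields) → FieldsValues pre →
      String → Ctx → Fields → Ctx
  | matchVoid : Ctx → Ctx
  | matchUnit : Ctx → Tm → Ctx
  | matchVar : Ctx → String → String → Tm → String → Tm → Ctx

/-- Plugging a term into an evaluation context: E[e]. -/
def Ctx.fill : Ctx → Tm → Tm
  | .hole, e => e
  | .appL E e2, e => .app (E.fill e) e2
  | .appR v _ E, e => .app v (E.fill e)
  | .letE f E e2, e => .letE f (E.fill e) e2
  | .label l E, e => .label l (E.fill e)
  | .record pre _ l E post, e => .record (Fields.append pre (.cons l (E.fill e) post))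
  | .proj E l, e => .proj (E.fill e) l
  | .remove E l, e => .remove (E.fill e) l
  | .modifyL E fs, e => .modify (E.fill e) fs
  | .extendL E fs, e => .extend (E.fill e) fs
  | .modifyR v _ pre _ l E post, e =>
      .modify v (Fields.append pre (.cons l (E.fill e) post))
  | .extendR v _ pre _ l E post, e =>
      .extend v (Fields.append pre (.cons l (E.fill e) post))
  | .matchVoid E, e => .matchVoid (E.fill e)
  | .matchUnit E e1, e => .matchUnit (E.fill e) e1
  | .matchVar E l x1 e1 x2 e2, e => .matchVar (E.fill e) l x1 e1 x2 e2

/-- The contextual step relation e1 ↣ e2 : E[e'] ↣ E[e''] iff e' ⇝ e''. -/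
def SStep (e1 e2 : Tm) : Prop :=
  ∃ (E : Ctx) (e' e'' : Tm), e1 = E.fill e' ∧ e2 = E.fill e'' ∧ Red e' e''

/-- Application of a type substitution to a typing environment. -/
def substEnv (S : List (String × Ty)) (Γ : TEnv) : TEnv :=
  Γ.map (fun p => (p.1, p.2.substMap S))

end Elevate

namespace Elevate

theorem ftvEnv_cons (x : String) (s : Scheme) (G : TEnv) : ftvEnv ((x,s) :: G) = s.ftv ∪ ftvEnv G := rfl

theorem lookup_agree_cons {Γ Γ0 : TEnv} {x : String} {σ : Scheme} {S : Finset String}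
    (h : ∀ y, y ≠ x → y ∈ S → List.lookup y Γ0 = List.lookup y Γ) :
    ∀ y ∈ S, List.lookup y ((x,σ)::Γ0) = List.lookup y ((x,σ)::Γ) := by
  intro y hy
  by_cases hx : y = x
  · simp [List.lookup, hx]
  · simp only [List.lookup, beq_eq_false_iff_ne, hx, not_false_iff, cond_false]
    have : (y == x) = false := by simpa using hx
    simp [this]
    exact h y hx hy

theorem weaken' {Δ Γ e T} (h : HasTy Δ Γ e T) :
    ∀ Γ', (∀ y ∈ e.fv, List.lookup y Γ' = List.lookup y Γ) → ftvEnv Γ' = ftvEnv Γ →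
      HasTy Δ Γ' e T := by
  induction h using HasTy.rec
    (motive_2 := fun Δ Γ fs lts _ =>
      ∀ Γ', (∀ y ∈ Fields.fv fs, List.lookup y Γ' = List.lookup y Γ) →
        ftvEnv Γ' = ftvEnv Γ → HasTyFields Δ Γ' fs lts)
  case var x σ t hl hi =>
    intro Γ0 hlk _
    exact HasTy.var (by rw [hlk x (by simp [Tm.fv])]; exact hl) hi
  case app ihf ihe =>
    intro Γ0 hlk hftv
    exact HasTy.app
      (ihf Γ0 (fun y hy => hlk y (by simp [Tm.fv]; exact Or.inl hy)) hftv)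
      (ihe Γ0 (fun y hy => hlk y (by simp [Tm.fv]; exact Or.inr hy)) hftv)
  case lam x e t1 t2 he ih =>
    intro Γ0 hlk hftv
    refine HasTy.lam (ih _ (lookup_agree_cons ?_) (by rw [ftvEnv_cons, ftvEnv_cons, hftv]))
    intro y hyx hy
    exact hlk y (by simp [Tm.fv]; exact ⟨hyx, hy⟩)
  case letE f e1 e2 t1 t2 as hset hnd h1 h2 ih1 ih2 =>
    intro Γ0 hlk hftv
    refine HasTy.letE (as := as) (by rw [hftv]; exact hset) hnd
      (ih1 Γ0 (fun y hy => hlk y (by simp [Tm.fv]; exact Or.inl hy)) hftv)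
      (ih2 _ (lookup_agree_cons ?_) (by rw [ftvEnv_cons, ftvEnv_cons, hftv]))
    intro y hyx hy
    exact hlk y (by simp [Tm.fv]; exact Or.inr ⟨hyx, hy⟩)
  case fix =>
    intro Γ0 _ _; exact HasTy.fix
  case label hk hs ih =>
    intro Γ0 hlk hftv
    exact HasTy.label (ih Γ0 (fun y hy => hlk y (by simpa [Tm.fv] using hy)) hftv) hk hs
  case unroll ih =>
    intro Γ0 hlk hftv; exact HasTy.unroll (ih Γ0 hlk hftv)
  case roll ih =>
    intro Γ0 hlk hftv; exact HasTy.roll (ih Γ0 hlk hftv)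
  case recordCons ih =>
    intro Γ0 hlk hftv
    exact HasTy.recordCons (ih Γ0 (fun y hy => hlk y (by simpa [Tm.fv] using hy)) hftv)
  case recordMod ihe ihfs =>
    intro Γ0 hlk hftv
    exact HasTy.recordMod
      (ihe Γ0 (fun y hy => hlk y (by simp [Tm.fv]; exact Or.inl hy)) hftv)
      (ihfs Γ0 (fun y hy => hlk y (by simp [Tm.fv]; exact Or.inr hy)) hftv)
  case recordExt hty hk hs htf ihe ihfs =>
    intro Γ0 hlk hftv
    exact HasTy.recordExt
      (ihe Γ0 (fun y hy => hlk y (by simp [Tm.fv]; exact Or.inl hy)) hftv)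
      hk hs
      (ihfs Γ0 (fun y hy => hlk y (by simp [Tm.fv]; exact Or.inr hy)) hftv)
  case fieldAccess ih =>
    intro Γ0 hlk hftv
    exact HasTy.fieldAccess (ih Γ0 (fun y hy => hlk y (by simpa [Tm.fv] using hy)) hftv)
  case fieldDel ih =>
    intro Γ0 hlk hftv
    exact HasTy.fieldDel (ih Γ0 (fun y hy => hlk y (by simpa [Tm.fv] using hy)) hftv)
  case matchVoid ih =>
    intro Γ0 hlk hftv
    exact HasTy.matchVoid (ih Γ0 (fun y hy => hlk y (by simpa [Tm.fv] using hy)) hftv)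
  case matchUnit ihe ih1 =>
    intro Γ0 hlk hftv
    exact HasTy.matchUnit
      (ihe Γ0 (fun y hy => hlk y (by simp [Tm.fv]; exact Or.inl hy)) hftv)
      (ih1 Γ0 (fun y hy => hlk y (by simp [Tm.fv]; exact Or.inr hy)) hftv)
  case matchVar e l x1 e1 x2 e2 t ρ trhs cs hset hnd he h1 h2 ihe ih1 ih2 =>
    intro Γ0 hlk hftv
    refine HasTy.matchVar (cs := cs) (by rw [hftv]; exact hset) hnd
      (ihe Γ0 (fun y hy => hlk y (by simp [Tm.fv]; exact Or.inl hy)) hftv)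
      (ih1 _ (lookup_agree_cons ?_) (by rw [ftvEnv_cons, ftvEnv_cons, hftv]))
      (ih2 _ (lookup_agree_cons ?_) (by rw [ftvEnv_cons, ftvEnv_cons, hftv]))
    · intro y hyx hy
      exact hlk y (by simp [Tm.fv]; exact Or.inr (Or.inl ⟨hyx, hy⟩))
    · intro y hyx hy
      exact hlk y (by simp [Tm.fv]; exact Or.inr (Or.inr ⟨hyx, hy⟩))
  case nil Γ0 hlk hftv =>
    exact HasTyFields.nil
  case cons hty htf ihe ihfs Γ0 hlk hftv =>
    exact HasTyFields.cons
      (ihe Γ0 (fun y hy => hlk y (by simp [Fields.fv]; exact Or.inl hy)) hftv)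
      (ihfs Γ0 (fun y hy => hlk y (by simp [Fields.fv]; exact Or.inr hy)) hftv)
end Elevate

namespace Elevate

theorem ty_subst_rec (α : String) (s τ : Ty) : Ty.subst α s (.recT α τ) = .recT α τ := by
  simp [Ty.subst]

theorem fix_ty {Δ Γ e T} (h : HasTy Δ Γ e T) (he : e = .fix) :
    ∃ t1 t2 : Ty, T = .arrow (.arrow (.arrow t1 t2) (.arrow t1 t2)) (.arrow t1 t2) := by
  induction h using HasTy.rec (motive_2 := fun _ _ _ _ _ => True) <;> try trivial
  case fix t1 t2 => exact ⟨t1, t2, rfl⟩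
  case unroll α τ h ih =>
    obtain ⟨t1, t2, heq⟩ := ih he
    exact absurd heq (by simp)
  case roll α τ h ih =>
    obtain ⟨t1, t2, heq⟩ := ih he
    rw [Ty.subst] at heq
    simp at heq

theorem lam_inv' {Δ Γ e T} (h : HasTy Δ Γ e T) :
    ∀ y e' A B, e = .lam y e' → T = .arrow A B → HasTy Δ ((y, .mono A) :: Γ) e' B := by
  cases h <;> intro y e' A B he hT <;> try (exfalso; cases he; done)
  case lam h =>
    injection he with h1 h2
    injection hT with h3 h4
    subst h1; subst h2; subst h3; subst h4; exact h
  case unroll h => rw [ty_subst_rec] at hT; exact absurd hT (by simp)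
  case roll h => exact absurd hT (by simp)

theorem lam_inv {Δ Γ y e' A B} (h : HasTy Δ Γ (.lam y e') (.arrow A B)) :
    HasTy Δ ((y, .mono A) :: Γ) e' B := lam_inv' h y e' A B rfl rfl

theorem not_arrow_label {Δ Γ e T} (h : HasTy Δ Γ e T) :
    ∀ l w A B, e = .label l w → T = .arrow A B → False := by
  cases h <;> intro l w A B he hT <;> try (exfalso; cases he; done)
  case label => exact absurd hT (by simp)
  case unroll h => rw [ty_subst_rec] at hT; exact absurd hT (by simp)
  case roll h => exact absurd hT (by simp)

theorem not_arrow_record {Δ Γ e T} (h : HasTy Δ Γ e T) :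
    ∀ fs A B, e = .record fs → T = .arrow A B → False := by
  cases h <;> intro fs A B he hT <;> try (exfalso; cases he; done)
  case recordCons => exact absurd hT (by simp)
  case unroll h => rw [ty_subst_rec] at hT; exact absurd hT (by simp)
  case roll h => exact absurd hT (by simp)

theorem app_fix_inv {Δ Γ e T} (h : HasTy Δ Γ e T) :
    ∀ v, e = .app .fix v →
      ∃ t1 t2 : Ty, T = .arrow t1 t2 ∧
        HasTy Δ Γ v (.arrow (.arrow t1 t2) (.arrow t1 t2)) := by
  induction h using HasTy.rec (motive_2 := fun _ _ _ _ _ => True) <;>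
    (try trivial) <;> intro v he
  case app f a ta tb hf ha ihf iha =>
    injection he with h1 h2
    subst h1; subst h2
    obtain ⟨t1, t2, heq⟩ := fix_ty hf rfl
    obtain ⟨h1, h2⟩ : ta = .arrow (.arrow t1 t2) (.arrow t1 t2) ∧ tb = .arrow t1 t2 := by
      constructor <;> injection heq <;> assumption
    subst h1 h2
    exact ⟨t1, t2, rfl, ha⟩
  case unroll ih =>
    obtain ⟨t1, t2, heq, -⟩ := ih v he
    exact absurd heq (by simp)
  case roll ih =>
    obtain ⟨t1, t2, heq, -⟩ := ih v he
    rw [Ty.subst] at heq; simp at heq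
  all_goals exact absurd he (by simp)
end Elevate

namespace Elevate
theorem no_self_arrow (a b : Ty) : a ≠ Ty.arrow a b := by
  intro h
  have := congrArg sizeOf h
  simp at this
  omega

end Elevate

namespace Elevate
/-- **Preservation for fix unfolding** (the ST-Fix case of Subject Reduction):
if `Δ;· ⊢ fix v : t` with `v` a value, then `t = t1 → t2` for some types `t1, t2`,
with `Δ;· ⊢ v : (t1 → t2) → t1 → t2`, and `Δ;· ⊢ v (λx = fix v x) : t1 → t2`. -/
theorem preservation_fix (Δ : KEnv) (v : Tm) (t : Ty)
    (hv : IsValue v)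
    (h : HasTy Δ [] (.app .fix v) t) :
    ∃ t1 t2 : Ty, t = .arrow t1 t2 ∧
      HasTy Δ [] v (.arrow (.arrow t1 t2) (.arrow t1 t2)) ∧
      ∀ x : String, x ∉ v.fv →
        HasTy Δ [] (.app v (.lam x (.app (.app .fix v) (.var x)))) (.arrow t1 t2) := by
  obtain ⟨t1, t2, rfl, hv2⟩ := app_fix_inv h v rfl
  refine ⟨t1, t2, rfl, hv2, ?_⟩
  intro x hx
  have hv' : HasTy Δ [(x, Scheme.mono t1)] v (.arrow (.arrow t1 t2) (.arrow t1 t2)) := by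
    cases hv
    case label l w hw => exact absurd hv2 (fun hh => not_arrow_label hh l w _ _ rfl rfl)
    case record fs hfs => exact absurd hv2 (fun hh => not_arrow_record hh fs _ _ rfl rfl)
    case lam y e =>
      have hbody := lam_inv hv2
      refine HasTy.lam (weaken' hbody _ ?_ ?_)
      · intro z hz
        by_cases hzy : z = y
        · simp [List.lookup, hzy]
        · have hzv : z ∈ (Tm.lam y e).fv := by simp [Tm.fv]; exact ⟨hzy, hz⟩
          have hzx : z ≠ x := fun hh => hx (hh ▸ hzv)
          have b1 : (z == y) = false := by simpa using hzy
          have b2 : (z == x) = false := by simpa using hzx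
          simp [List.lookup, b1, b2]
      · show ((Ty.arrow t1 t2).ftv ∪ (t1.ftv ∪ ∅) : Finset String) = (Ty.arrow t1 t2).ftv ∪ ∅
        simp [Ty.ftv]
        ext a
        simp
        tauto
    case fix =>
      obtain ⟨a, b, heq⟩ := fix_ty hv2 rfl
      exfalso
      injection heq with h1 h2
      injection h2 with h3 h4
      subst h3; subst h4
      exact no_self_arrow _ _ h1
  exact HasTy.app hv2 (HasTy.lam (HasTy.app (HasTy.app HasTy.fix hv')
    (HasTy.var (by simp [List.lookup]) Inst.refl)))

end Elevate
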